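/- arXiv:2402.15842 — 2 statements merged into one kernel-verified Lean document; each statement's English description precedes it below -/
import Mathlib

section
/- Let n ≥ 2 and let h_n = f_{1/n} * f_{2/n} * ⋯ * f_{(n-1)/n}, where f_β(t) = t^(β-1)·1_{t>0}. Then h_n * h_n = ((2π)^(n-1)/n) · f_1^{*(n-1)}, where f_1^{*(n-1)}(t) = t^(n-2)/(n-2)! for t > 0. -/
/-- Convolution of functions supported on the positive reals. -/
noncomputable def conv (f g : ℝ → ℝ) : ℝ → ℝ := fun t => ∫ τ in (0:ℝ)..t, f τ * g (t - τ)

/-- `fp α t = t^(α-1)` for `t > 0`, and `0` otherwise. -/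
noncomputable def fp (α : ℝ) : ℝ → ℝ := fun t => if 0 < t then t ^ (α - 1) else 0

/-- Convolution `fp (α 0) * fp (α 1) * ⋯ * fp (α n)` of `n+1` power functions. -/
noncomputable def multiConv : (n : ℕ) → (Fin (n + 1) → ℝ) → (ℝ → ℝ)
  | 0, α => fp (α 0)
  | n + 1, α => conv (fp (α 0)) (multiConv n (fun i => α i.succ))

/-- With `n = m + 2`, `hconv m = f_{1/n} * f_{2/n} * ⋯ * f_{(n-1)/n}`. -/
noncomputable def hconv (m : ℕ) : ℝ → ℝ :=
  multiConv m (fun i : Fin (m + 1) => ((i : ℕ) + 1 : ℝ) / ((m : ℝ) + 2))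

/-! The Beta integral `∫₀ᵗ τ^(a-1) (t-τ)^(b-1) dτ = B(a,b) t^(a+b-1)` gives `f_a * f_b = B(a,b) f_{a+b}`,
so `h_n = (∏ Γ(k/n) / Γ((n-1)/2)) f_{(n-1)/2}` and `h_n * h_n = (∏ Γ(k/n))² / Γ(n-1) · f_{n-1}`.
Pairing `Γ(k/n)` with `Γ((n-k)/n) = Γ(1 - k/n)`, Euler's reflection formula turns `(∏ Γ(k/n))²` into
`∏ π / sin(πk/n) = (2π)^(n-1)/n`, since `∏_{0<k<n} 2 sin(πk/n) = ∏ |1 - ζ^k| = n` for a primitive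
`n`-th root of unity `ζ`. -/

open MeasureTheory Real Finset

lemma fp_of_nonpos (a : ℝ) {t : ℝ} (ht : t ≤ 0) : fp a t = 0 := if_neg ht.not_gt

lemma conv_smul_left (c : ℝ) (f g : ℝ → ℝ) : conv (c • f) g = c • conv f g := by
  funext t
  simp only [conv, Pi.smul_apply, smul_eq_mul, ← intervalIntegral.integral_const_mul, mul_assoc]

lemma conv_smul_right (c : ℝ) (f g : ℝ → ℝ) : conv f (c • g) = c • conv f g := by
  funext t
  simp only [conv, Pi.smul_apply, smul_eq_mul, ← intervalIntegral.integral_const_mul, mul_left_comm]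

lemma Complex.betaIntegral_ofReal {a b : ℝ} (ha : 0 < a) (hb : 0 < b) :
    Complex.betaIntegral a b = ((Real.Gamma a * Real.Gamma b / Real.Gamma (a + b) : ℝ) : ℂ) := by
  have hab : Complex.Gamma ((a + b : ℝ) : ℂ) ≠ 0 := by
    rw [Complex.Gamma_ofReal]; exact_mod_cast (Real.Gamma_pos_of_pos (add_pos ha hb)).ne'
  have h := Complex.Gamma_mul_Gamma_eq_betaIntegral (s := (a : ℂ)) (t := (b : ℂ))
    (by simpa using ha) (by simpa using hb)
  rw [← Complex.ofReal_add] at h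
  rw [Complex.ofReal_div, Complex.ofReal_mul, ← Complex.Gamma_ofReal, ← Complex.Gamma_ofReal,
    ← Complex.Gamma_ofReal, eq_div_iff hab, h, mul_comm]

lemma conv_fp_fp_apply_of_pos {a b t : ℝ} (ha : 0 < a) (hb : 0 < b) (ht : 0 < t) :
    conv (fp a) (fp b) t = Gamma a * Gamma b / Gamma (a + b) * t ^ (a + b - 1) := by
  apply Complex.ofReal_injective
  have hcast : ((conv (fp a) (fp b) t : ℝ) : ℂ) =
      ∫ x in (0 : ℝ)..t, (x : ℂ) ^ ((a : ℂ) - 1) * ((t : ℂ) - x) ^ ((b : ℂ) - 1) := by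
    rw [conv, ← intervalIntegral.integral_ofReal, intervalIntegral.integral_of_le ht.le,
      intervalIntegral.integral_of_le ht.le, integral_Ioc_eq_integral_Ioo,
      integral_Ioc_eq_integral_Ioo]
    refine setIntegral_congr_fun measurableSet_Ioo fun x ⟨hx0, hxt⟩ => ?_
    rw [fp, fp, if_pos hx0, if_pos (sub_pos.mpr hxt), Complex.ofReal_mul,
      Complex.ofReal_cpow hx0.le, Complex.ofReal_cpow (sub_pos.mpr hxt).le]
    push_cast
    rfl
  rw [hcast, Complex.betaIntegral_scaled _ _ ht, Complex.betaIntegral_ofReal ha hb,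
    Complex.ofReal_mul, Complex.ofReal_cpow ht.le, mul_comm]
  push_cast
  rfl

theorem conv_fp_fp {a b : ℝ} (ha : 0 < a) (hb : 0 < b) :
    conv (fp a) (fp b) = (Gamma a * Gamma b / Gamma (a + b)) • fp (a + b) := by
  funext t
  rcases le_or_gt t 0 with ht | ht
  · have hzero : ∀ τ ∈ Set.uIcc 0 t, fp a τ * fp b (t - τ) = 0 := fun τ hτ => by
      rw [Set.uIcc_of_ge ht] at hτ
      rw [fp_of_nonpos a hτ.2, zero_mul]
    simp [conv, intervalIntegral.integral_congr hzero, fp_of_nonpos _ ht]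
  · rw [conv_fp_fp_apply_of_pos ha hb ht, Pi.smul_apply, smul_eq_mul, fp, if_pos ht]

theorem multiConv_eq_smul_fp (n : ℕ) (α : Fin (n + 1) → ℝ) (hα : ∀ i, 0 < α i) :
    multiConv n α = ((∏ i, Gamma (α i)) / Gamma (∑ i, α i)) • fp (∑ i, α i) := by
  induction n with
  | zero =>
    simp [multiConv, div_self (Gamma_pos_of_pos (hα 0)).ne']
  | succ n ih =>
    have hsum : 0 < ∑ i : Fin (n + 1), α i.succ := sum_pos (fun i _ => hα i.succ) univ_nonempty
    rw [multiConv, ih _ fun i => hα i.succ, conv_smul_right, conv_fp_fp (hα 0) hsum, smul_smul,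
      Fin.sum_univ_succ α, Fin.prod_univ_succ (fun i => Gamma (α i))]
    congr 1
    have := (Gamma_pos_of_pos hsum).ne'
    field_simp

lemma sum_range_cast_add_one (n : ℕ) : ∑ k ∈ range n, ((k : ℝ) + 1) = n * (n + 1) / 2 := by
  induction n with
  | zero => simp
  | succ n ih => rw [sum_range_succ, ih]; push_cast; ring

lemma sin_pi_mul_div_pos {k n : ℕ} (hk : k < n) : 0 < sin (π * (k + 1) / (n + 1)) := by
  have hn : (0 : ℝ) < n + 1 := by positivity
  have hkn : (k : ℝ) + 1 < n + 1 := by exact_mod_cast Nat.succ_lt_succ hk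
  apply sin_pos_of_pos_of_lt_pi (by positivity)
  rw [div_lt_iff₀ hn]
  nlinarith [pi_pos]

theorem prod_two_mul_sin_pi_mul_div (n : ℕ) :
    ∏ k ∈ range n, 2 * sin (π * (k + 1) / (n + 1)) = n + 1 := by
  have hζ : IsPrimitiveRoot (Complex.exp (2 * π * Complex.I / (n + 1 : ℕ))) (n + 1) :=
    Complex.isPrimitiveRoot_exp _ n.succ_ne_zero
  have hnorm := congrArg norm hζ.prod_one_sub_pow_eq_order
  rw [norm_prod, show ‖(n : ℂ) + 1‖ = n + 1 by exact_mod_cast Complex.norm_natCast (n + 1)] at hnorm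
  refine (prod_congr rfl fun k hk => ?_).trans hnorm
  have hpow : Complex.exp (2 * π * Complex.I / (n + 1 : ℕ)) ^ (k + 1) =
      Complex.exp (Complex.I * ((2 * (π * (k + 1) / (n + 1)) : ℝ) : ℂ)) := by
    rw [← Complex.exp_nat_mul]; push_cast; ring_nf
  rw [hpow, norm_sub_rev, Complex.norm_exp_I_mul_ofReal_sub_one, mul_div_cancel_left₀ _ two_ne_zero,
    Real.norm_eq_abs, abs_of_pos (mul_pos two_pos (sin_pi_mul_div_pos (mem_range.mp hk)))]

theorem prod_Gamma_div_sq (n : ℕ) :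
    (∏ k ∈ range n, Gamma ((k + 1) / (n + 1))) ^ 2 = (2 * π) ^ n / (n + 1) := by
  have hn : (0 : ℝ) < n + 1 := by positivity
  have hreflect : ∏ k ∈ range n, Gamma ((k + 1) / (n + 1)) =
      ∏ k ∈ range n, Gamma (1 - (k + 1) / (n + 1)) := by
    rw [← prod_range_reflect]
    refine prod_congr rfl fun k hk => ?_
    have hkn := mem_range.mp hk
    rw [Nat.cast_sub (by omega : k ≤ n - 1), Nat.cast_sub (by omega : 1 ≤ n)]
    congr 1
    field_simp
    push_cast
    ring
  calc (∏ k ∈ range n, Gamma ((k + 1) / (n + 1))) ^ 2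
      = ∏ k ∈ range n, π / sin (π * (k + 1) / (n + 1)) := by
        rw [sq]
        nth_rw 2 [hreflect]
        rw [← prod_mul_distrib]
        refine prod_congr rfl fun k _ => ?_
        rw [Gamma_mul_Gamma_one_sub, mul_div_assoc]
    _ = ∏ k ∈ range n, (2 * π) / (2 * sin (π * (k + 1) / (n + 1))) :=
        prod_congr rfl fun k _ => (mul_div_mul_left _ _ two_ne_zero).symm
    _ = (2 * π) ^ n / (n + 1) := by
        rw [prod_div_distrib, prod_two_mul_sin_pi_mul_div, prod_const, card_range]

/-- Writing `n = m + 2` (so that `n ≥ 2`):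
`h_n * h_n = ((2π)^(n-1)/n) · f_1^{*(n-1)}`, with `f_1^{*(n-1)}(t) = t^(n-2)/(n-2)!` on `t > 0`. -/
theorem stmt_10 (m : ℕ) :
    conv (hconv m) (hconv m) = fun t : ℝ =>
      ((2 * Real.pi) ^ (m + 1) / ((m : ℝ) + 2)) *
        (if 0 < t then t ^ m / (Nat.factorial m : ℝ) else 0) := by
  set α : Fin (m + 1) → ℝ := fun i => ((i : ℕ) + 1 : ℝ) / ((m : ℝ) + 2)
  have hm : (m : ℝ) + 2 = ((m + 1 : ℕ) : ℝ) + 1 := by push_cast; ring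
  have hα : ∀ i, 0 < α i := fun i => by positivity
  have hsum : ∑ i, α i = (m + 1) / 2 := by
    rw [Fin.sum_univ_eq_sum_range (fun k => ((k : ℝ) + 1) / ((m : ℝ) + 2)), ← sum_div,
      sum_range_cast_add_one]
    field_simp
    push_cast
    ring
  have hprod : (∏ i, Gamma (α i)) ^ 2 = (2 * π) ^ (m + 1) / ((m : ℝ) + 2) := by
    rw [Fin.prod_univ_eq_prod_range (fun k => Gamma (((k : ℝ) + 1) / ((m : ℝ) + 2))), hm,
      prod_Gamma_div_sq]
  have hs : 0 < ((m : ℝ) + 1) / 2 := by positivity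
  have hΓ := (Gamma_pos_of_pos hs).ne'
  rw [hconv, multiConv_eq_smul_fp m α hα, hsum, conv_smul_left, conv_smul_right,
    conv_fp_fp hs hs, add_halves, Gamma_nat_eq_factorial, ← hprod]
  funext t
  simp only [Pi.smul_apply, smul_eq_mul, fp, add_sub_cancel_right, rpow_natCast]
  split_ifs
  · field_simp
  · simp
end

section
/- For 0 < α < 1 and integer n ≥ 2, with f_n(t) = t^(n-1) on t > 0, any family satisfying the log-convexity condition (4) of Proposition 1 obeys: (log f_{α+n}(t) − log f_n(t))/α = log t, hence f_{α+n}(t) = t^(α+n-1). -/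
/-!
Put `g β = log f_β(t)`. At the integers, `g m = (m - 1) log t`, so the chords of the convex
function `g` over `[n - 1, n]` and `[n, n + 1]` both have slope `log t`. Convexity squeezes the
slope over `[n, n + α]` between these two, hence it equals `log t` as well.
-/

theorem ConvexOn.slope_eq_of_adjacent_slopes_eq {𝕜 : Type*} [Field 𝕜] [LinearOrder 𝕜]
    [IsStrictOrderedRing 𝕜] {s : Set 𝕜} {g : 𝕜 → 𝕜} (hg : ConvexOn 𝕜 s g) {a b c y m : 𝕜}
    (ha : a ∈ s) (hc : c ∈ s) (hab : a < b) (hby : b < y) (hyc : y ≤ c)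
    (hleft : (g b - g a) / (b - a) = m) (hright : (g c - g b) / (c - b) = m) :
    (g y - g b) / (y - b) = m := by
  have hs := convex_iff_ordConnected.mp hg.1
  have hb : b ∈ s := hs.out ha hc ⟨hab.le, (hby.trans_le hyc).le⟩
  have hy : y ∈ s := hs.out ha hc ⟨(hab.trans hby).le, hyc⟩
  refine le_antisymm ?_ ?_
  · exact hright ▸ hg.secant_mono hb hy hc hby.ne' (hby.trans_le hyc).ne' hyc
  · exact hleft ▸ hg.slope_mono_adjacent ha hy hab hby

theorem stmt_18 (f : ℝ → ℝ → ℝ)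
    (hpos : ∀ α > (0:ℝ), ∀ t > (0:ℝ), 0 < f α t)
    (hnat : ∀ m : ℕ, 1 ≤ m → ∀ t > (0:ℝ), f m t = t ^ ((m : ℝ) - 1))
    (hconvex : ∀ t > (0:ℝ), ConvexOn ℝ (Set.Ioi 0) (fun α => Real.log (f α t)))
    (α : ℝ) (hα0 : 0 < α) (hα1 : α < 1) (n : ℕ) (hn : 2 ≤ n) (t : ℝ) (ht : 0 < t) :
    (Real.log (f (α + n) t) - Real.log (f n t)) / α = Real.log t ∧
      f (α + n) t = t ^ (α + n - 1) := by
  have hlog (m : ℕ) (hm : 1 ≤ m) : Real.log (f m t) = ((m : ℝ) - 1) * Real.log t := by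
    rw [hnat m hm t ht, Real.log_rpow ht]
  have hn' : (2 : ℝ) ≤ n := by exact_mod_cast hn
  have hprev := hlog (n - 1) (by omega)
  rw [Nat.cast_sub (by omega : 1 ≤ n), Nat.cast_one] at hprev
  have hnext := hlog (n + 1) (by omega)
  rw [Nat.cast_add_one] at hnext
  have hcur := hlog n (by omega)
  have hslope : (Real.log (f (α + n) t) - Real.log (f n t)) / α = Real.log t := by
    have h := (hconvex t ht).slope_eq_of_adjacent_slopes_eq (a := n - 1) (b := n) (c := n + 1)
      (y := α + n) (m := Real.log t) (Set.mem_Ioi.mpr (by linarith))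
      (Set.mem_Ioi.mpr (by linarith)) (by linarith) (by linarith) (by linarith)
      (by rw [hcur, hprev, sub_sub_cancel, div_one]; ring)
      (by rw [hnext, hcur, add_sub_cancel_left, div_one]; ring)
    simpa only [add_sub_cancel_right] using h
  have hval : Real.log (f (α + n) t) = (α + n - 1) * Real.log t := by
    rw [div_eq_iff hα0.ne', hcur] at hslope
    linarith
  refine ⟨hslope, Real.log_injOn_pos (hpos _ (by positivity) t ht) (Real.rpow_pos_of_pos ht _) ?_⟩
  rw [hval, Real.log_rpow ht]
end
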